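/- Let u: [0,T] → X be piecewise constant on intervals (t_m, t_{m+1}] with values u^{m+1} and t_m = mk. If k·Σ_{n=0}^{M−r} ‖u^{n+r} − u^n‖_X² ≤ C·(rk) for all 1 ≤ r ≤ M, then for every δ ∈ (0,T): ∫_0^{T−δ} ‖u(t+δ) − u(t)‖_X² dt ≤ C'·δ, for a constant C' independent of k and δ. -/

import Mathlib

/-!
Write `δ = r k + s` with `r ∈ ℕ` and `0 < s ≤ k`. On each step `(n k, (n + 1) k]` the difference
`u(t + δ) - u(t)` is constant on two pieces, of lengths `k - s` and `s`, with values
`u^{n+1+r} - u^{n+1}` and `u^{n+1+(r+1)} - u^{n+1}`. Hence the integral is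
`(k - s) E_r + s E_{r+1}`, where the discrete shift energies satisfy `E_r ≤ C r` by hypothesis,
and `(k - s) C r + s C (r + 1) = C δ`.
-/

open Finset intervalIntegral MeasureTheory

lemma intervalIntegrable_of_forall_Ioc_eq_const {a b c : ℝ} {g : ℝ → ℝ} (hab : a ≤ b)
    (h : ∀ t ∈ Set.Ioc a b, g t = c) : IntervalIntegrable g volume a b := by
  rw [intervalIntegrable_iff_integrableOn_Ioc_of_le hab]
  exact (integrableOn_const measure_Ioc_lt_top.ne).congr_fun (fun t ht => (h t ht).symm)
    measurableSet_Ioc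

lemma integral_of_forall_Ioc_eq_const {a b c : ℝ} {g : ℝ → ℝ} (hab : a ≤ b)
    (h : ∀ t ∈ Set.Ioc a b, g t = c) : ∫ t in a..b, g t = (b - a) * c := by
  rw [integral_of_le hab, setIntegral_congr_fun measurableSet_Ioc h, setIntegral_const,
    Real.volume_real_Ioc_of_le hab, smul_eq_mul]

lemma exists_eq_nat_mul_add_of_pos {δ k : ℝ} (hδ : 0 < δ) (hk : 0 < k) :
    ∃ (r : ℕ) (s : ℝ), δ = r * k + s ∧ 0 < s ∧ s ≤ k := by
  have hδk : 0 < δ / k := div_pos hδ hk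
  obtain ⟨r, hr⟩ : ∃ r : ℕ, ⌈δ / k⌉₊ = r + 1 :=
    Nat.exists_eq_add_one_of_ne_zero (Nat.ceil_pos.2 hδk).ne'
  have hle : δ / k ≤ r + 1 := by exact_mod_cast hr ▸ Nat.le_ceil (δ / k)
  have hlt : (r : ℝ) < δ / k := by
    have := Nat.ceil_lt_add_one hδk.le
    push_cast [hr] at this
    linarith
  rw [div_le_iff₀ hk] at hle
  rw [lt_div_iff₀ hk] at hlt
  exact ⟨r, δ - r * k, by ring, by linarith, by linarith⟩

section StepFunction

variable {X : Type*} [NormedAddCommGroup X] {M : ℕ} {k s : ℝ} {v : ℕ → X} {f : ℝ → X}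

-- Indices start at `1` because the interpolant never takes the value `v 0`.
noncomputable def shiftEnergy (v : ℕ → X) (N r : ℕ) : ℝ :=
  ∑ n ∈ range N, ‖v (n + 1 + r) - v (n + 1)‖ ^ 2

lemma shiftEnergy_succ (v : ℕ → X) (N r : ℕ) :
    shiftEnergy v (N + 1) r = shiftEnergy v N r + ‖v (N + 1 + r) - v (N + 1)‖ ^ 2 :=
  sum_range_succ _ _

lemma shiftEnergy_le {C : ℝ} (hk : 0 < k)
    (hv : ∀ r : ℕ, 1 ≤ r → r ≤ M →
      k * ∑ n ∈ range (M - r + 1), ‖v (n + r) - v n‖ ^ 2 ≤ C * ((r : ℝ) * k))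
    {r : ℕ} (hr : r ≤ M) : shiftEnergy v (M - r) r ≤ C * r := by
  rcases Nat.eq_zero_or_pos r with rfl | hr0
  · simp [shiftEnergy]
  have hsum := hv r hr0 hr
  rw [sum_range_succ'] at hsum
  have h0 : 0 ≤ ‖v (0 + r) - v 0‖ ^ 2 := by positivity
  have : k * shiftEnergy v (M - r) r ≤ k * (C * r) := by
    calc k * shiftEnergy v (M - r) r
        ≤ k * (shiftEnergy v (M - r) r + ‖v (0 + r) - v 0‖ ^ 2) := by gcongr; linarith
      _ ≤ C * (r * k) := by simpa only [shiftEnergy, Nat.add_right_comm] using hsum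
      _ = k * (C * r) := by ring
  exact le_of_mul_le_mul_left this hk

def IsStepInterpolant (M : ℕ) (k : ℝ) (v : ℕ → X) (f : ℝ → X) : Prop :=
  ∀ m : ℕ, m < M → ∀ t ∈ Set.Ioc ((m : ℝ) * k) (((m : ℝ) + 1) * k), f t = v (m + 1)

lemma shift_sq_norm_eq_of_mem_left_piece
    (hf : IsStepInterpolant M k v f) (hs : 0 ≤ s) {n r : ℕ} (hn : n + r + 1 ≤ M) :
    ∀ t ∈ Set.Ioc ((n : ℝ) * k) (n * k + (k - s)),
      ‖f (t + (r * k + s)) - f t‖ ^ 2 = ‖v (n + 1 + r) - v (n + 1)‖ ^ 2 := by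
  rintro t ⟨ht₁, ht₂⟩
  have hshift : f (t + (r * k + s)) = v (n + r + 1) :=
    hf (n + r) (by omega) _ ⟨by push_cast; linarith, by push_cast; linarith⟩
  rw [hshift, hf n (by omega) t ⟨ht₁, by linarith⟩, Nat.add_right_comm]

lemma shift_sq_norm_eq_of_mem_right_piece
    (hf : IsStepInterpolant M k v f) (hsk : s ≤ k) {n r : ℕ} (hn : n + r + 2 ≤ M) :
    ∀ t ∈ Set.Ioc (n * k + (k - s)) (((n : ℝ) + 1) * k),
      ‖f (t + (r * k + s)) - f t‖ ^ 2 = ‖v (n + 1 + (r + 1)) - v (n + 1)‖ ^ 2 := by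
  rintro t ⟨ht₁, ht₂⟩
  have hshift : f (t + (r * k + s)) = v (n + r + 1 + 1) :=
    hf (n + r + 1) (by omega) _ ⟨by push_cast; linarith, by push_cast; linarith⟩
  rw [hshift, hf n (by omega) t ⟨by linarith, ht₂⟩,
    show n + r + 1 + 1 = n + 1 + (r + 1) by omega]

lemma integral_shift_sq_norm_cell
    (hf : IsStepInterpolant M k v f) (hs : 0 ≤ s) (hsk : s ≤ k) {n r : ℕ} (hn : n + r + 2 ≤ M) :
    IntervalIntegrable (fun t => ‖f (t + (r * k + s)) - f t‖ ^ 2) volume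
        (n * k) ((n + 1) * k) ∧
      ∫ t in (n * k : ℝ)..((n + 1) * k), ‖f (t + (r * k + s)) - f t‖ ^ 2 =
        (k - s) * ‖v (n + 1 + r) - v (n + 1)‖ ^ 2 +
          s * ‖v (n + 1 + (r + 1)) - v (n + 1)‖ ^ 2 := by
  have hleft := shift_sq_norm_eq_of_mem_left_piece hf hs (n := n) (r := r) (by omega)
  have hright := shift_sq_norm_eq_of_mem_right_piece hf hsk hn
  have h₁ : (n : ℝ) * k ≤ n * k + (k - s) := by linarith
  have h₂ : (n : ℝ) * k + (k - s) ≤ (n + 1) * k := by linarith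
  have i₁ := intervalIntegrable_of_forall_Ioc_eq_const h₁ hleft
  have i₂ := intervalIntegrable_of_forall_Ioc_eq_const h₂ hright
  refine ⟨i₁.trans i₂, ?_⟩
  rw [← integral_add_adjacent_intervals i₁ i₂, integral_of_forall_Ioc_eq_const h₁ hleft,
    integral_of_forall_Ioc_eq_const h₂ hright]
  ring

lemma integral_shift_sq_norm_initial_cells
    (hf : IsStepInterpolant M k v f) (hs : 0 ≤ s) (hsk : s ≤ k) {r : ℕ} : ∀ {N : ℕ}, N + r + 1 ≤ M →
    IntervalIntegrable (fun t => ‖f (t + (r * k + s)) - f t‖ ^ 2) volume 0 (N * k) ∧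
      ∫ t in (0 : ℝ)..(N * k), ‖f (t + (r * k + s)) - f t‖ ^ 2 =
        (k - s) * shiftEnergy v N r + s * shiftEnergy v N (r + 1)
  | 0, _ => by simp [shiftEnergy]
  | N + 1, hN => by
    obtain ⟨i, e⟩ := integral_shift_sq_norm_initial_cells hf hs hsk (r := r) (N := N) (by omega)
    obtain ⟨ic, ec⟩ := integral_shift_sq_norm_cell hf hs hsk (n := N) (r := r) (by omega)
    push_cast
    refine ⟨i.trans ic, ?_⟩
    rw [← integral_add_adjacent_intervals i ic, e, ec, shiftEnergy_succ, shiftEnergy_succ]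
    ring

lemma integral_shift_sq_norm_eq
    (hf : IsStepInterpolant M k v f) (hs : 0 ≤ s) (hsk : s ≤ k) {N r : ℕ} (hN : N + r + 1 ≤ M) :
    ∫ t in (0 : ℝ)..(N * k + (k - s)), ‖f (t + (r * k + s)) - f t‖ ^ 2 =
      (k - s) * shiftEnergy v (N + 1) r + s * shiftEnergy v N (r + 1) := by
  obtain ⟨i, e⟩ := integral_shift_sq_norm_initial_cells hf hs hsk hN
  have hlast := shift_sq_norm_eq_of_mem_left_piece hf hs hN
  have h : (N : ℝ) * k ≤ N * k + (k - s) := by linarith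
  rw [← integral_add_adjacent_intervals i (intervalIntegrable_of_forall_Ioc_eq_const h hlast), e,
    integral_of_forall_Ioc_eq_const h hlast, shiftEnergy_succ]
  ring

end StepFunction

theorem piecewise_constant_time_shift_general
    {X : Type*} [NormedAddCommGroup X]
    (T C : ℝ) :
    ∃ C' : ℝ, 0 < C' ∧
      ∀ (M : ℕ), 0 < M →
        ∀ (v : ℕ → X) (f : ℝ → X),
          (∀ m : ℕ, m < M →
            ∀ t ∈ Set.Ioc ((m : ℝ) * (T / M)) (((m : ℝ) + 1) * (T / M)),
              f t = v (m + 1)) →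
          (∀ r : ℕ, 1 ≤ r → r ≤ M →
            (T / M) * ∑ n ∈ range (M - r + 1), ‖v (n + r) - v n‖ ^ 2 ≤
              C * ((r : ℝ) * (T / M))) →
          ∀ δ ∈ Set.Ioo (0:ℝ) T,
            (∫ t in (0:ℝ)..(T - δ), ‖f (t + δ) - f t‖ ^ 2) ≤ C' * δ := by
  refine ⟨max C 1, lt_max_of_lt_right one_pos, ?_⟩
  rintro M hM v f hf hv δ ⟨hδ, hδT⟩
  set k := T / M
  have hMk : M * k = T := mul_div_cancel₀ T (by positivity)
  have hk : 0 < k := div_pos (hδ.trans hδT) (by exact_mod_cast hM)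
  obtain ⟨r, s, rfl, hs, hsk⟩ := exists_eq_nat_mul_add_of_pos hδ hk
  have hrM : r < M := by
    have : (r : ℝ) * k < M * k := by linarith
    exact_mod_cast lt_of_mul_lt_mul_right this hk.le
  obtain ⟨N, hN⟩ : ∃ N, M = N + r + 1 := ⟨M - r - 1, by omega⟩
  have hTδ : T - (r * k + s) = N * k + (k - s) := by rw [← hMk, hN]; push_cast; ring
  have hE₁ := shiftEnergy_le hk hv hrM.le
  have hE₂ := shiftEnergy_le hk hv hrM
  rw [show M - r = N + 1 by omega] at hE₁
  rw [show M - (r + 1) = N by omega] at hE₂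
  rw [hTδ, integral_shift_sq_norm_eq hf hs.le hsk hN.ge]
  calc (k - s) * shiftEnergy v (N + 1) r + s * shiftEnergy v N (r + 1)
      ≤ (k - s) * (C * r) + s * (C * (r + 1 : ℕ)) := by gcongr
    _ = C * (r * k + s) := by push_cast; ring
    _ ≤ max C 1 * (r * k + s) := by gcongr; exact le_max_left C 1

/-- Translation of the discrete fractional time-derivative bound into the
continuous time-shift estimate for piecewise constant interpolants:
∫_0^{T−δ} ‖u(t+δ) − u(t)‖² dt ≤ C' δ, with C' independent of k and δ. -/
theorem piecewise_constant_time_shift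
    {X : Type*} [NormedAddCommGroup X]
    (T C : ℝ) (hT : 0 < T) (hC : 0 ≤ C) :
    ∃ C' : ℝ, 0 < C' ∧
      ∀ (M : ℕ), 0 < M →
        ∀ (v : ℕ → X) (f : ℝ → X),
          (∀ m : ℕ, m < M →
            ∀ t ∈ Set.Ioc ((m : ℝ) * (T / M)) (((m : ℝ) + 1) * (T / M)),
              f t = v (m + 1)) →
          (∀ r : ℕ, 1 ≤ r → r ≤ M →
            (T / M) * ∑ n ∈ range (M - r + 1), ‖v (n + r) - v n‖ ^ 2 ≤
              C * ((r : ℝ) * (T / M))) →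
          ∀ δ ∈ Set.Ioo (0:ℝ) T,
            (∫ t in (0:ℝ)..(T - δ), ‖f (t + δ) - f t‖ ^ 2) ≤ C' * δ :=
  piecewise_constant_time_shift_general T C
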